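/- arXiv:2604.24097 — 4 statements merged into one kernel-verified Lean document; each statement's English description precedes it below -/
import Mathlib

section
/- Let p ≥ 5 be a prime and let G = C_p × C_p be the direct product of two cyclic groups of order p. Then the number of Beauville structures for G is |𝕌(G)| = (p+1)·p·(p−1)³·(p−2)·(p−3)·(p−4). -/
open Subgroup Equiv

namespace Beauville

variable {G : Type*} [Group G]

/-- `𝕋(G)`: generating triples with product 1. -/
def TripleSet (G : Type*) [Group G] : Set (G × G × G) :=
  {t | Subgroup.closure {t.1, t.2.1} = ⊤ ∧ t.1 * t.2.1 * t.2.2 = 1}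

lemma mem_tripleSet {x y z : G} :
    (x, y, z) ∈ TripleSet G ↔ Subgroup.closure {x, y} = ⊤ ∧ x * y * z = 1 := Iff.rfl

lemma closure_pair_top_of {x y u v : G} (h : Subgroup.closure {x, y} = ⊤)
    (hx : x ∈ Subgroup.closure {u, v}) (hy : y ∈ Subgroup.closure {u, v}) :
    Subgroup.closure ({u, v} : Set G) = ⊤ := by
  rw [eq_top_iff, ← h, Subgroup.closure_le]
  intro g hg
  simp only [Set.mem_insert_iff, Set.mem_singleton_iff] at hg
  rcases hg with rfl | rfl
  · exact hx
  · exact hy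

lemma mem_cp_left (u v : G) : u ∈ Subgroup.closure ({u, v} : Set G) :=
  Subgroup.subset_closure (Set.mem_insert _ _)

lemma mem_cp_right (u v : G) : v ∈ Subgroup.closure ({u, v} : Set G) :=
  Subgroup.subset_closure (Set.mem_insert_of_mem _ rfl)

lemma closure_pair_map_top (f : G ≃* G) {x y : G} (h : Subgroup.closure {x, y} = ⊤) :
    Subgroup.closure ({f x, f y} : Set G) = ⊤ := by
  have himg : ({f x, f y} : Set G) = f.toMonoidHom '' {x, y} := (Set.image_pair _ _ _).symm
  rw [himg, ← MonoidHom.map_closure, h, ← MonoidHom.range_eq_map]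
  simpa [MonoidHom.range_eq_top] using f.surjective

section Perms

/-- raw permutation `σ₁ : (x,y,z) ↦ (y,z,x)`. -/
def rotRaw : Equiv.Perm (G × G × G) where
  toFun t := (t.2.1, t.2.2, t.1)
  invFun t := (t.2.2, t.1, t.2.1)
  left_inv _ := rfl
  right_inv _ := rfl

@[simp] lemma rotRaw_apply (t : G × G × G) : rotRaw t = (t.2.1, t.2.2, t.1) := rfl

lemma rotRaw_mem {t : G × G × G} (ht : t ∈ TripleSet G) : rotRaw t ∈ TripleSet G := by
  obtain ⟨x, y, z⟩ := t
  rw [mem_tripleSet] at ht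
  obtain ⟨hc, hp⟩ := ht
  rw [rotRaw_apply]
  have hx : x = (y * z)⁻¹ := by
    rw [mul_assoc] at hp
    exact eq_inv_of_mul_eq_one_left hp
  refine mem_tripleSet.2 ⟨closure_pair_top_of hc ?_ ?_, ?_⟩
  · rw [hx]
    exact inv_mem (mul_mem (mem_cp_left _ _) (mem_cp_right _ _))
  · exact mem_cp_left _ _
  · rw [hx, mul_inv_cancel]

lemma rotRaw_iff (t : G × G × G) : t ∈ TripleSet G ↔ rotRaw t ∈ TripleSet G :=
  ⟨fun h => rotRaw_mem h, fun h => by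
    have h2 := rotRaw_mem (rotRaw_mem h)
    rwa [show rotRaw (rotRaw (rotRaw t)) = t by simp] at h2⟩

/-- `σ₁` as a permutation of `𝕋(G)`. -/
def sigma1T (G : Type*) [Group G] : Equiv.Perm (TripleSet G) :=
  rotRaw.subtypePerm (fun t => (rotRaw_iff t).symm)

/-- `σ₂ = σ₁ ∘ σ₁`, acting as `(x,y,z) ↦ (z,x,y)`. -/
def sigma2T (G : Type*) [Group G] : Equiv.Perm (TripleSet G) :=
  sigma1T G * sigma1T G

/-- raw permutation `σ₃ : (x,y,z) ↦ (z,y,x^y)`. -/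
def sigma3Raw : Equiv.Perm (G × G × G) where
  toFun t := (t.2.2, t.2.1, t.2.1⁻¹ * t.1 * t.2.1)
  invFun t := (t.2.1 * t.2.2 * t.2.1⁻¹, t.2.1, t.1)
  left_inv := by rintro ⟨x, y, z⟩; simp [mul_assoc]
  right_inv := by rintro ⟨x, y, z⟩; simp [mul_assoc]

@[simp] lemma sigma3Raw_apply (t : G × G × G) :
    sigma3Raw t = (t.2.2, t.2.1, t.2.1⁻¹ * t.1 * t.2.1) := rfl

@[simp] lemma sigma3Raw_symm_apply (t : G × G × G) :
    sigma3Raw.symm t = (t.2.1 * t.2.2 * t.2.1⁻¹, t.2.1, t.1) := rfl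

lemma sigma3Raw_mem {t : G × G × G} (ht : t ∈ TripleSet G) : sigma3Raw t ∈ TripleSet G := by
  obtain ⟨x, y, z⟩ := t
  rw [mem_tripleSet] at ht
  obtain ⟨hc, hp⟩ := ht
  have hz : z = (x * y)⁻¹ := eq_inv_of_mul_eq_one_right hp
  rw [sigma3Raw_apply]
  refine mem_tripleSet.2 ⟨closure_pair_top_of hc ?_ ?_, ?_⟩
  · have hxe : x = z⁻¹ * y⁻¹ := by rw [hz]; group
    rw [hxe]
    exact mul_mem (inv_mem (mem_cp_left _ _)) (inv_mem (mem_cp_right _ _))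
  · exact mem_cp_right _ _
  · rw [hz]; group

lemma sigma3Raw_symm_mem {t : G × G × G} (ht : t ∈ TripleSet G) :
    sigma3Raw.symm t ∈ TripleSet G := by
  obtain ⟨x, y, z⟩ := t
  rw [mem_tripleSet] at ht
  obtain ⟨hc, hp⟩ := ht
  have hz : z = (x * y)⁻¹ := eq_inv_of_mul_eq_one_right hp
  rw [sigma3Raw_symm_apply]
  refine mem_tripleSet.2 ⟨closure_pair_top_of hc ?_ ?_, ?_⟩
  · have hxe : x = y⁻¹ * (y * z * y⁻¹)⁻¹ := by rw [hz]; group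
    rw [hxe]
    exact mul_mem (inv_mem (mem_cp_right _ _)) (inv_mem (mem_cp_left _ _))
  · exact mem_cp_right _ _
  · rw [hz]; group

lemma sigma3Raw_iff (t : G × G × G) : t ∈ TripleSet G ↔ sigma3Raw t ∈ TripleSet G :=
  ⟨fun h => sigma3Raw_mem h, fun h => by
    have h2 := sigma3Raw_symm_mem h
    rwa [Equiv.symm_apply_apply] at h2⟩

/-- `σ₃` as a permutation of `𝕋(G)`. -/
def sigma3T (G : Type*) [Group G] : Equiv.Perm (TripleSet G) :=
  sigma3Raw.subtypePerm (fun t => (sigma3Raw_iff t).symm)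

/-- raw permutation `σ₄ : (x,y,z) ↦ (y,x,z^x)`. -/
def sigma4Raw : Equiv.Perm (G × G × G) where
  toFun t := (t.2.1, t.1, t.1⁻¹ * t.2.2 * t.1)
  invFun t := (t.2.1, t.1, t.2.1 * t.2.2 * t.2.1⁻¹)
  left_inv := by rintro ⟨x, y, z⟩; simp [mul_assoc]
  right_inv := by rintro ⟨x, y, z⟩; simp [mul_assoc]

@[simp] lemma sigma4Raw_apply (t : G × G × G) :
    sigma4Raw t = (t.2.1, t.1, t.1⁻¹ * t.2.2 * t.1) := rfl

@[simp] lemma sigma4Raw_symm_apply (t : G × G × G) :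
    sigma4Raw.symm t = (t.2.1, t.1, t.2.1 * t.2.2 * t.2.1⁻¹) := rfl

lemma sigma4Raw_mem {t : G × G × G} (ht : t ∈ TripleSet G) : sigma4Raw t ∈ TripleSet G := by
  obtain ⟨x, y, z⟩ := t
  rw [mem_tripleSet] at ht
  obtain ⟨hc, hp⟩ := ht
  have hz : z = (x * y)⁻¹ := eq_inv_of_mul_eq_one_right hp
  rw [sigma4Raw_apply]
  refine mem_tripleSet.2 ⟨closure_pair_top_of hc ?_ ?_, ?_⟩
  · exact mem_cp_right _ _
  · exact mem_cp_left _ _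
  · rw [hz]; group

lemma sigma4Raw_symm_mem {t : G × G × G} (ht : t ∈ TripleSet G) :
    sigma4Raw.symm t ∈ TripleSet G := by
  obtain ⟨x, y, z⟩ := t
  rw [mem_tripleSet] at ht
  obtain ⟨hc, hp⟩ := ht
  have hz : z = (x * y)⁻¹ := eq_inv_of_mul_eq_one_right hp
  rw [sigma4Raw_symm_apply]
  refine mem_tripleSet.2 ⟨closure_pair_top_of hc ?_ ?_, ?_⟩
  · exact mem_cp_right _ _
  · exact mem_cp_left _ _
  · rw [hz]; group

lemma sigma4Raw_iff (t : G × G × G) : t ∈ TripleSet G ↔ sigma4Raw t ∈ TripleSet G :=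
  ⟨fun h => sigma4Raw_mem h, fun h => by
    have h2 := sigma4Raw_symm_mem h
    rwa [Equiv.symm_apply_apply] at h2⟩

/-- `σ₄` as a permutation of `𝕋(G)`. -/
def sigma4T (G : Type*) [Group G] : Equiv.Perm (TripleSet G) :=
  sigma4Raw.subtypePerm (fun t => (sigma4Raw_iff t).symm)

/-- raw permutation `σ₅ : (x,y,z) ↦ (x,z,y^z)`. -/
def sigma5Raw : Equiv.Perm (G × G × G) where
  toFun t := (t.1, t.2.2, t.2.2⁻¹ * t.2.1 * t.2.2)
  invFun t := (t.1, t.2.1 * t.2.2 * t.2.1⁻¹, t.2.1)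
  left_inv := by rintro ⟨x, y, z⟩; simp [mul_assoc]
  right_inv := by rintro ⟨x, y, z⟩; simp [mul_assoc]

@[simp] lemma sigma5Raw_apply (t : G × G × G) :
    sigma5Raw t = (t.1, t.2.2, t.2.2⁻¹ * t.2.1 * t.2.2) := rfl

@[simp] lemma sigma5Raw_symm_apply (t : G × G × G) :
    sigma5Raw.symm t = (t.1, t.2.1 * t.2.2 * t.2.1⁻¹, t.2.1) := rfl

lemma sigma5Raw_mem {t : G × G × G} (ht : t ∈ TripleSet G) : sigma5Raw t ∈ TripleSet G := by
  obtain ⟨x, y, z⟩ := t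
  rw [mem_tripleSet] at ht
  obtain ⟨hc, hp⟩ := ht
  have hz : z = (x * y)⁻¹ := eq_inv_of_mul_eq_one_right hp
  rw [sigma5Raw_apply]
  refine mem_tripleSet.2 ⟨closure_pair_top_of hc ?_ ?_, ?_⟩
  · exact mem_cp_left _ _
  · have hye : y = x⁻¹ * z⁻¹ := by rw [hz]; group
    rw [hye]
    exact mul_mem (inv_mem (mem_cp_left _ _)) (inv_mem (mem_cp_right _ _))
  · rw [hz]; group

lemma sigma5Raw_symm_mem {t : G × G × G} (ht : t ∈ TripleSet G) :
    sigma5Raw.symm t ∈ TripleSet G := by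
  obtain ⟨x, y, z⟩ := t
  rw [mem_tripleSet] at ht
  obtain ⟨hc, hp⟩ := ht
  have hz : z = (x * y)⁻¹ := eq_inv_of_mul_eq_one_right hp
  rw [sigma5Raw_symm_apply]
  refine mem_tripleSet.2 ⟨closure_pair_top_of hc ?_ ?_, ?_⟩
  · exact mem_cp_left _ _
  · have hv : y * z * y⁻¹ = x⁻¹ * y⁻¹ := by rw [hz]; group
    rw [hv]
    have h2 : (x * (x⁻¹ * y⁻¹))⁻¹ ∈ Subgroup.closure ({x, x⁻¹ * y⁻¹} : Set G) :=
      inv_mem (mul_mem (mem_cp_left _ _) (mem_cp_right _ _))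
    simpa using h2
  · rw [hz]; group

lemma sigma5Raw_iff (t : G × G × G) : t ∈ TripleSet G ↔ sigma5Raw t ∈ TripleSet G :=
  ⟨fun h => sigma5Raw_mem h, fun h => by
    have h2 := sigma5Raw_symm_mem h
    rwa [Equiv.symm_apply_apply] at h2⟩

/-- `σ₅` as a permutation of `𝕋(G)`. -/
def sigma5T (G : Type*) [Group G] : Equiv.Perm (TripleSet G) :=
  sigma5Raw.subtypePerm (fun t => (sigma5Raw_iff t).symm)

end Perms


/-- Evaluation of a word in two letters at a pair of group elements. -/
def wordEval (w : FreeGroup Bool) (x y : G) : G :=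
  FreeGroup.lift (fun b => bif b then x else y) w

lemma wordEval_conj (w : FreeGroup Bool) (x y c : G) :
    wordEval w (c⁻¹ * x * c) (c⁻¹ * y * c) = c⁻¹ * wordEval w x y * c := by
  have key : FreeGroup.lift (fun b => bif b then c⁻¹ * x * c else c⁻¹ * y * c) =
      ((MulAut.conj c⁻¹).toMonoidHom.comp (FreeGroup.lift (fun b => bif b then x else y))) := by
    apply FreeGroup.ext_hom
    intro b
    cases b <;> simp [MulAut.conj_apply, mul_assoc]
  unfold wordEval
  rw [key]
  simp [MulAut.conj_apply, mul_assoc]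

/-- Conjugation of a triple by a group element (`t^c`). -/
def conjTriple (c : G) (t : G × G × G) : G × G × G :=
  (c⁻¹ * t.1 * c, c⁻¹ * t.2.1 * c, c⁻¹ * t.2.2 * c)

lemma conjTriple_conjTriple (c d : G) (t : G × G × G) :
    conjTriple d (conjTriple c t) = conjTriple (c * d) t := by
  simp [conjTriple, mul_assoc]

@[simp] lemma conjTriple_one (t : G × G × G) : conjTriple 1 t = t := by
  simp [conjTriple]

lemma conjTriple_mem (c : G) {t : G × G × G} (ht : t ∈ TripleSet G) :
    conjTriple c t ∈ TripleSet G := by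
  obtain ⟨x, y, z⟩ := t
  rw [mem_tripleSet] at ht
  obtain ⟨hc, hp⟩ := ht
  refine mem_tripleSet.2 ⟨?_, ?_⟩
  · have h1 : (c⁻¹ * x * c : G) = (MulAut.conj c⁻¹ : G ≃* G) x := by
      simp [MulAut.conj_apply]
    have h2 : (c⁻¹ * y * c : G) = (MulAut.conj c⁻¹ : G ≃* G) y := by
      simp [MulAut.conj_apply]
    rw [h1, h2]
    exact closure_pair_map_top _ hc
  · have : c⁻¹ * x * c * (c⁻¹ * y * c) * (c⁻¹ * z * c) = c⁻¹ * (x * y * z) * c := by group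
    rw [this, hp]
    group

/-- The raw permutation `β_w : t ↦ t^{w(x,y)}`. -/
def betaRaw (w : FreeGroup Bool) : Equiv.Perm (G × G × G) where
  toFun t := conjTriple (wordEval w t.1 t.2.1) t
  invFun t := conjTriple (wordEval w t.1 t.2.1)⁻¹ t
  left_inv := by
    rintro ⟨x, y, z⟩
    have h1 : wordEval w (conjTriple (wordEval w x y) (x, y, z)).1
        (conjTriple (wordEval w x y) (x, y, z)).2.1 = wordEval w x y := by
      show wordEval w ((wordEval w x y)⁻¹ * x * wordEval w x y)
          ((wordEval w x y)⁻¹ * y * wordEval w x y) = _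
      rw [wordEval_conj]
      group
    show conjTriple _ (conjTriple (wordEval w x y) (x, y, z)) = (x, y, z)
    rw [h1, conjTriple_conjTriple, mul_inv_cancel, conjTriple_one]
  right_inv := by
    rintro ⟨x, y, z⟩
    have h1 : wordEval w (conjTriple (wordEval w x y)⁻¹ (x, y, z)).1
        (conjTriple (wordEval w x y)⁻¹ (x, y, z)).2.1 = wordEval w x y := by
      show wordEval w ((wordEval w x y)⁻¹⁻¹ * x * (wordEval w x y)⁻¹)
          ((wordEval w x y)⁻¹⁻¹ * y * (wordEval w x y)⁻¹) = _
      rw [wordEval_conj]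
      group
    show conjTriple _ (conjTriple (wordEval w x y)⁻¹ (x, y, z)) = (x, y, z)
    rw [h1, conjTriple_conjTriple, inv_mul_cancel, conjTriple_one]

lemma betaRaw_iff (w : FreeGroup Bool) (t : G × G × G) :
    t ∈ TripleSet G ↔ betaRaw w t ∈ TripleSet G := by
  constructor
  · intro h
    exact conjTriple_mem _ h
  · intro h
    have h2 : (betaRaw w).symm (betaRaw w t) ∈ TripleSet G := conjTriple_mem _ h
    rwa [Equiv.symm_apply_apply] at h2

/-- `β_w` as a permutation of `𝕋(G)`. -/
def betaT (G : Type*) [Group G] (w : FreeGroup Bool) : Equiv.Perm (TripleSet G) :=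
  (betaRaw w).subtypePerm (fun t => (betaRaw_iff w t).symm)

/-- The raw diagonal action of an automorphism on triples. -/
def autRaw (α : MulAut G) : Equiv.Perm (G × G × G) :=
  Equiv.prodCongr (α : G ≃* G).toEquiv
    (Equiv.prodCongr (α : G ≃* G).toEquiv (α : G ≃* G).toEquiv)

@[simp] lemma autRaw_apply (α : MulAut G) (t : G × G × G) :
    autRaw α t = (α t.1, α t.2.1, α t.2.2) := rfl

lemma autRaw_mem (α : MulAut G) {t : G × G × G} (ht : t ∈ TripleSet G) :
    autRaw α t ∈ TripleSet G := by
  obtain ⟨x, y, z⟩ := t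
  rw [mem_tripleSet] at ht
  obtain ⟨hc, hp⟩ := ht
  rw [autRaw_apply]
  refine mem_tripleSet.2 ⟨closure_pair_map_top (α : G ≃* G) hc, ?_⟩
  rw [← map_mul, ← map_mul, hp, map_one]

lemma autRaw_symm_apply (α : MulAut G) (t : G × G × G) :
    (autRaw α).symm t = autRaw α⁻¹ t := rfl

lemma autRaw_iff (α : MulAut G) (t : G × G × G) :
    t ∈ TripleSet G ↔ autRaw α t ∈ TripleSet G := by
  constructor
  · exact fun h => autRaw_mem α h
  · intro h
    have h2 := autRaw_mem α⁻¹ h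
    rw [← autRaw_symm_apply, Equiv.symm_apply_apply] at h2
    exact h2

/-- `α̃`, the diagonal action of an automorphism on `𝕋(G)`. -/
def dAutT (α : MulAut G) : Equiv.Perm (TripleSet G) :=
  (autRaw α).subtypePerm (fun t => (autRaw_iff α t).symm)

/-- `ι̃_g`, the diagonal action of the inner automorphism `ι_g` on `𝕋(G)`. -/
def dInnT (g : G) : Equiv.Perm (TripleSet G) :=
  dAutT (MulAut.conj g)

/-- `J(G) = {β_w : w a word in two letters}`. -/
def JSet (G : Type*) [Group G] : Set (Equiv.Perm (TripleSet G)) :=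
  Set.range (betaT G)

/-- The subgroup `⟨σ₁, σ₄⟩` of `Sym(𝕋(G))`. -/
def SS14 (G : Type*) [Group G] : Subgroup (Equiv.Perm (TripleSet G)) :=
  Subgroup.closure {sigma1T G, sigma4T G}

/-- `I(G) = ⟨DInn(G), σ₁, σ₂, σ₃, σ₄, σ₅⟩`. -/
def IGroup (G : Type*) [Group G] : Subgroup (Equiv.Perm (TripleSet G)) :=
  Subgroup.closure (Set.range (dInnT (G := G)) ∪
    {sigma1T G, sigma2T G, sigma3T G, sigma4T G, sigma5T G})


/-- `Σ(x,y)`: the union of all conjugates of `⟨x⟩`, `⟨y⟩` and `⟨x*y⟩`. -/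
def sigmaSet (x y : G) : Set G :=
  ⋃ g : G, (fun h => g * h * g⁻¹) ''
    ((Subgroup.zpowers x : Set G) ∪ (Subgroup.zpowers y : Set G) ∪
      (Subgroup.zpowers (x * y) : Set G))

/-- An (unmixed) Beauville structure for `G`. -/
def IsBeauvilleStructure (t : (G × G × G) × (G × G × G)) : Prop :=
  ∃ x₁ y₁ x₂ y₂ : G,
    t = ((x₁, y₁, (x₁ * y₁)⁻¹), (x₂, y₂, (x₂ * y₂)⁻¹)) ∧
    Subgroup.closure {x₁, y₁} = ⊤ ∧ Subgroup.closure {x₂, y₂} = ⊤ ∧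
    sigmaSet x₁ y₁ ∩ sigmaSet x₂ y₂ = {1}

/-- `𝕌(G)`, the set of all Beauville structures for `G`, as a subset of `G³ × G³`. -/
def beauvilleStructures (G : Type*) [Group G] : Set ((G × G × G) × (G × G × G)) :=
  {t | IsBeauvilleStructure t}

/-- A Beauville group is a group admitting a Beauville structure. -/
def IsBeauvilleGroup (G : Type*) [Group G] : Prop :=
  ∃ t : (G × G × G) × (G × G × G), IsBeauvilleStructure t

/-- A metacyclic group: it has a cyclic normal subgroup with cyclic quotient. -/
def IsMetacyclic (G : Type*) [Group G] : Prop :=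
  ∃ (N : Subgroup G) (hN : N.Normal), IsCyclic N ∧
    (haveI := hN; IsCyclic (G ⧸ N))

/-- `𝕌(G)` viewed as a subset of `𝕋(G) × 𝕋(G)`. -/
def USet (G : Type*) [Group G] : Set (TripleSet G × TripleSet G) :=
  {t | IsBeauvilleStructure ((t.1 : G × G × G), (t.2 : G × G × G))}

/-- Generators of `B(G)`: the permutations of `𝕌(G)` induced by the componentwise action
of `I(G) × I(G)` and by the diagonal action of `Aut(G)`. -/
def BGens (G : Type*) [Group G] : Set (Equiv.Perm (USet G)) :=
  {π | ∃ ρ₁ ∈ IGroup G, ∃ ρ₂ ∈ IGroup G,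
      ∀ t : USet G, ((π t : TripleSet G × TripleSet G)) = (ρ₁ (t : TripleSet G × TripleSet G).1, ρ₂ (t : TripleSet G × TripleSet G).2)} ∪
  {π | ∃ α : MulAut G,
      ∀ t : USet G, ((π t : TripleSet G × TripleSet G)) = (dAutT α (t : TripleSet G × TripleSet G).1, dAutT α (t : TripleSet G × TripleSet G).2)}

/-- The permutation(s) of `𝕌(G)` exchanging the two triples. -/
def tauGens (G : Type*) [Group G] : Set (Equiv.Perm (USet G)) :=
  {π | ∀ t : USet G, ((π t : TripleSet G × TripleSet G)) =
      ((t : TripleSet G × TripleSet G).2, (t : TripleSet G × TripleSet G).1)}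

/-- `B(G)`, the subgroup of `Sym(𝕌(G))` generated by the action of `I(G) × I(G)`
and the diagonal action of `Aut(G)`. -/
def BGroup (G : Type*) [Group G] : Subgroup (Equiv.Perm (USet G)) :=
  Subgroup.closure (BGens G)

/-- `A_𝕌(G) = ⟨B(G), τ⟩`. -/
def AUGroup (G : Type*) [Group G] : Subgroup (Equiv.Perm (USet G)) :=
  Subgroup.closure (BGens G ∪ tauGens G)


/-- The subgroup of `G` generated by all `n`-th powers. -/
def powSubgroup (G : Type*) [Group G] (n : ℕ) : Subgroup G :=
  Subgroup.closure (Set.range fun g : G => g ^ n)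

/-- The subgroup of inner automorphisms, `Inn(G)`. -/
def innAut (G : Type*) [Group G] : Subgroup (MulAut G) :=
  (MulAut.conj : G →* MulAut G).range

instance innAut_normal (G : Type*) [Group G] : (innAut G).Normal := by
  constructor
  rintro - ⟨g, rfl⟩ α
  refine ⟨α g, ?_⟩
  ext x
  simp only [MulAut.conj_apply, MulAut.mul_apply, MulAut.inv_def, map_mul, map_inv,
    MulEquiv.apply_symm_apply]

section Presented

open scoped commutatorElement

/-- The two generators of the free group on two letters. -/
def fA : FreeGroup Bool := FreeGroup.of true

def fB : FreeGroup Bool := FreeGroup.of false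

/-- Relations of `M(p,e,i) = ⟨a,b ∣ a^{p^e} = b^{p^e} = 1, [a,b] = a^{p^i}⟩`. -/
def MRels (p e i : ℕ) : Set (FreeGroup Bool) :=
  {fA ^ p ^ e, fB ^ p ^ e, ⁅fA, fB⁆ * (fA ^ p ^ i)⁻¹}

/-- The metacyclic group `M(p,e,i)`. -/
abbrev MGroup (p e i : ℕ) : Type := PresentedGroup (MRels p e i)

def ma (p e i : ℕ) : MGroup p e i := PresentedGroup.of true

def mb (p e i : ℕ) : MGroup p e i := PresentedGroup.of false

/-- Relations of
`H(p,e,i,j,k) = ⟨a,b ∣ a^{p^e} = [b,a]^{p^j} = [b,a,a] = [b,a,b] = 1, b^{p^i} = [b,a]^{p^k}⟩`. -/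
def HRels (p e i j k : ℕ) : Set (FreeGroup Bool) :=
  {fA ^ p ^ e, ⁅fB, fA⁆ ^ p ^ j, ⁅⁅fB, fA⁆, fA⁆, ⁅⁅fB, fA⁆, fB⁆,
    fB ^ p ^ i * (⁅fB, fA⁆ ^ p ^ k)⁻¹}

/-- The group `H(p,e,i,j,k)` of nilpotency class 2. -/
abbrev HGroup (p e i j k : ℕ) : Type := PresentedGroup (HRels p e i j k)

def ha (p e i j k : ℕ) : HGroup p e i j k := PresentedGroup.of true

def hb (p e i j k : ℕ) : HGroup p e i j k := PresentedGroup.of false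

/-- Relations of
`K(p,e,j) = ⟨a,b ∣ a^{p^e} = b^{p^e} = [b,a]^{p^j} = [b,a,b] = [b,a,a] = 1⟩`. -/
def KRels (p e j : ℕ) : Set (FreeGroup Bool) :=
  {fA ^ p ^ e, fB ^ p ^ e, ⁅fB, fA⁆ ^ p ^ j, ⁅⁅fB, fA⁆, fB⁆, ⁅⁅fB, fA⁆, fA⁆}

/-- The group `K(p,e,j)` of nilpotency class 2. -/
abbrev KGroup (p e j : ℕ) : Type := PresentedGroup (KRels p e j)

def ka (p e j : ℕ) : KGroup p e j := PresentedGroup.of true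

def kb (p e j : ℕ) : KGroup p e j := PresentedGroup.of false

end Presented

/-!
Write `G = Multiplicative V` with `V = 𝔽_p²`. Subgroups of `G` are `𝔽_p`-subspaces of `V`, so
`x, y` generate `G` iff they form a basis, and then `Σ(x, y)` is the union of the three lines
through `x`, `y` and `x + y`, three distinct points of `ℙ¹(𝔽_p)`. Two such triples form a
Beauville structure iff the six points are distinct. A basis `(x, y)` is determined by its three
points up to a common scalar in `𝔽_pˣ`, so
`|𝕌(G)| = (p - 1)² · (p + 1) p (p - 1) (p - 2) (p - 3) (p - 4)`,
the second factor counting ordered six-tuples of distinct points of `ℙ¹(𝔽_p)`.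
-/

open Projectivization
open scoped LinearAlgebra.Projectivization

section ProjectiveLine

variable {K V : Type*} [Field K] [AddCommGroup V] [Module K V]

lemma mk_ne_mk_iff_linearIndependent {u v : V} (hu : u ≠ 0) (hv : v ≠ 0) :
    mk K u hu ≠ mk K v hv ↔ LinearIndependent K ![u, v] := by
  rw [ne_comm, ne_eq, mk_eq_mk_iff', LinearIndependent.pair_iff' hu, not_exists]

lemma span_singleton_inf_eq_bot_iff {u v : V} (hu : u ≠ 0) (hv : v ≠ 0) :
    (K ∙ u) ⊓ (K ∙ v) = ⊥ ↔ mk K u hu ≠ mk K v hv := by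
  rw [← disjoint_iff, Submodule.disjoint_span_singleton' hv, Submodule.mem_span_singleton,
    ne_comm, ne_eq, mk_eq_mk_iff']

lemma linearIndependent_pair_iff_span_eq_top (hV : Module.finrank K V = 2) {u v : V} :
    LinearIndependent K ![u, v] ↔ Submodule.span K {u, v} = ⊤ := by
  have : FiniteDimensional K V := Module.finite_of_finrank_eq_succ hV
  have hcard : Fintype.card (Fin 2) = Module.finrank K V := by simp [hV]
  rw [← Matrix.range_cons_cons_empty]
  refine ⟨fun h => h.span_eq_top_of_card_eq_finrank' hcard, fun h => ?_⟩
  exact linearIndependent_of_top_le_span_of_card_eq_finrank h.ge hcard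

variable (K V) in
@[ext]
structure IndepPair where
  x : V
  y : V
  linearIndependent : LinearIndependent K ![x, y]

namespace IndepPair

variable (b : IndepPair K V)

def vectors : Fin 3 → V := ![b.x, b.y, b.x + b.y]

lemma linearIndependent_vectors {i j : Fin 3} (hij : i ≠ j) :
    LinearIndependent K ![b.vectors i, b.vectors j] := by
  have hxy := b.linearIndependent
  have hx : LinearIndependent K ![b.x, b.x + b.y] := LinearIndependent.pair_add_right_iff.2 hxy
  have hy : LinearIndependent K ![b.y, b.x + b.y] := by
    rw [add_comm]
    exact LinearIndependent.pair_add_right_iff.2 (LinearIndependent.pair_symm_iff.1 hxy)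
  fin_cases i <;> fin_cases j <;> dsimp [vectors] <;>
    first
    | exact absurd rfl hij
    | assumption
    | exact LinearIndependent.pair_symm_iff.1 ‹_›

lemma vectors_ne_zero (i : Fin 3) : b.vectors i ≠ 0 := by
  obtain ⟨j, hij⟩ : ∃ j, i ≠ j := by fin_cases i <;> decide
  simpa using (b.linearIndependent_vectors hij).ne_zero 0

lemma x_ne_zero : b.x ≠ 0 := b.vectors_ne_zero 0

def points : Fin 3 ↪ ℙ K V :=
  ⟨fun i => Projectivization.mk K (b.vectors i) (b.vectors_ne_zero i), fun i j hij => by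
    by_contra hne
    exact (mk_ne_mk_iff_linearIndependent _ _).2 (b.linearIndependent_vectors hne) hij⟩

instance : SMul Kˣ (IndepPair K V) :=
  ⟨fun c b => ⟨c • b.x, c • b.y, by
    simpa only [Units.smul_def] using
      (LinearIndependent.pair_smul_iff c.ne_zero).2 b.linearIndependent⟩⟩

@[simp] lemma smul_x (c : Kˣ) : (c • b).x = c • b.x := rfl

@[simp] lemma smul_y (c : Kˣ) : (c • b).y = c • b.y := rfl

lemma points_smul (c : Kˣ) : (c • b).points = b.points := by
  ext i
  refine (Projectivization.mk_eq_mk_iff K _ _ _ _).2 ⟨c, ?_⟩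
  fin_cases i <;> simp [vectors, smul_add]

lemma exists_smul_eq_of_points_eq {b b' : IndepPair K V} (h : b.points = b'.points) :
    ∃ c : Kˣ, b' = c • b := by
  have hpt (i : Fin 3) : ∃ a : Kˣ, b'.vectors i = a • b.vectors i :=
    ((Projectivization.mk_eq_mk_iff K _ _ _ _).1 (DFunLike.congr_fun h i).symm).imp
      fun _ => Eq.symm
  obtain ⟨a, ha⟩ := hpt 0
  obtain ⟨β, hβ⟩ := hpt 1
  obtain ⟨γ, hγ⟩ := hpt 2
  simp only [vectors, Matrix.cons_val_zero, Matrix.cons_val_one, Matrix.cons_val, Units.smul_def]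
    at ha hβ hγ
  obtain ⟨haγ, hβγ⟩ := LinearIndependent.pair_iff.1 b.linearIndependent
    ((a : K) - γ) ((β : K) - γ) (by
      rw [sub_smul, sub_smul, ← ha, ← hβ]
      linear_combination (norm := module) hγ)
  obtain rfl : β = a := Units.ext (by linear_combination hβγ - haγ)
  exact ⟨β, IndepPair.ext ha hβ⟩

lemma exists_points_eq (hV : Module.finrank K V = 2) (e : Fin 3 ↪ ℙ K V) :
    ∃ b : IndepPair K V, b.points = e := by
  have huv : LinearIndependent K ![(e 0).rep, (e 1).rep] :=
    linearIndependent_pair_iff_ne.2 (e.injective.ne (by decide))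
  have hspan := (linearIndependent_pair_iff_span_eq_top hV).1 huv
  obtain ⟨α, β, hw⟩ :=
    Submodule.mem_span_pair.1 (hspan.ge (Submodule.mem_top (x := (e 2).rep)))
  have mk_eq {v : V} (hv : v ≠ 0) (i : Fin 3) (h : ∃ a : K, a • (e i).rep = v) :
      Projectivization.mk K v hv = e i := by
    rw [← (e i).mk_rep, mk_eq_mk_iff']
    exact h
  have hα : α ≠ 0 := by
    rintro rfl
    refine (e.injective.ne (by decide : (2 : Fin 3) ≠ 1)) ?_
    rw [← mk_eq (e 2).rep_nonzero 1 ⟨β, by simpa using hw⟩, (e 2).mk_rep]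
  have hβ : β ≠ 0 := by
    rintro rfl
    refine (e.injective.ne (by decide : (2 : Fin 3) ≠ 0)) ?_
    rw [← mk_eq (e 2).rep_nonzero 0 ⟨α, by simpa using hw⟩, (e 2).mk_rep]
  refine ⟨⟨α • (e 0).rep, β • (e 1).rep,
    (LinearIndependent.pair_smul_smul_iff hα.isUnit hβ.isUnit).2 huv⟩, ?_⟩
  ext i
  fin_cases i
  · exact mk_eq _ 0 ⟨α, rfl⟩
  · exact mk_eq _ 1 ⟨β, rfl⟩
  · exact mk_eq _ 2 ⟨1, by simp [vectors, hw]⟩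

variable (K V) in
noncomputable def equivUnitsProdEmbedding (hV : Module.finrank K V = 2) :
    Kˣ × (Fin 3 ↪ ℙ K V) ≃ IndepPair K V :=
  Equiv.ofBijective (fun ce => ce.1 • (exists_points_eq hV ce.2).choose) <| by
    constructor
    · rintro ⟨c, e⟩ ⟨c', e'⟩ h
      obtain rfl : e = e' := by
        simpa only [points_smul, (exists_points_eq hV _).choose_spec] using congrArg points h
      have hx := congrArg IndepPair.x h
      simp only [smul_x, Units.smul_def] at hx
      exact Prod.ext (Units.ext (smul_left_injective K (IndepPair.x_ne_zero _) hx)) rfl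
    · intro b
      obtain ⟨c, hc⟩ := exists_smul_eq_of_points_eq (exists_points_eq hV b.points).choose_spec
      exact ⟨(c, b.points), hc.symm⟩

lemma points_equivUnitsProdEmbedding (hV : Module.finrank K V = 2)
    (ce : Kˣ × (Fin 3 ↪ ℙ K V)) : (equivUnitsProdEmbedding K V hV ce).points = ce.2 := by
  change (ce.1 • (exists_points_eq hV ce.2).choose).points = _
  rw [points_smul, (exists_points_eq hV _).choose_spec]

end IndepPair

theorem card_indepPair_prod_disjoint_points (hV : Module.finrank K V = 2) [Finite (ℙ K V)] :
    Nat.card {bb : IndepPair K V × IndepPair K V //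
        Disjoint (Set.range bb.1.points) (Set.range bb.2.points)} =
      Nat.card Kˣ ^ 2 * (Nat.card (ℙ K V)).descFactorial 6 := by
  let e := IndepPair.equivUnitsProdEmbedding K V hV
  have := Fintype.ofFinite (ℙ K V)
  calc _ = Nat.card {r : (Kˣ × Kˣ) × ((Fin 3 ↪ ℙ K V) × (Fin 3 ↪ ℙ K V)) //
        Disjoint (Set.range r.2.1) (Set.range r.2.2)} :=
        Nat.card_congr <| ((Equiv.prodCongr e e).symm.trans
          (Equiv.prodProdProdComm _ _ _ _)).subtypeEquiv fun bb => by
          rw [← e.apply_symm_apply bb.1, ← e.apply_symm_apply bb.2,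
            IndepPair.points_equivUnitsProdEmbedding, IndepPair.points_equivUnitsProdEmbedding]
          rfl
    _ = Nat.card (Fin 3 ⊕ Fin 3 ↪ ℙ K V) * Nat.card (Kˣ × Kˣ) :=
        (Nat.card_congr <| ((Equiv.prodComm _ _).subtypeEquiv
          (q := fun r : ((Fin 3 ↪ ℙ K V) × (Fin 3 ↪ ℙ K V)) × (Kˣ × Kˣ) =>
            Disjoint (Set.range r.1.1) (Set.range r.1.2)) fun _ => Iff.rfl).trans
          (Equiv.prodSubtypeFstEquivSubtypeProd.trans
          (Equiv.prodCongr Equiv.sumEmbeddingEquivProdEmbeddingDisjoint.symm (Equiv.refl _)))).trans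
          (Nat.card_prod _ _)
    _ = _ := by
      rw [Nat.card_prod, Nat.card_eq_fintype_card (α := _ ↪ _), Fintype.card_embedding_eq,
        Nat.card_eq_fintype_card (α := ℙ K V)]
      simp only [Fintype.card_sum, Fintype.card_fin]
      ring

end ProjectiveLine

section ZModModule

variable {n : ℕ} {V : Type*} [AddCommGroup V] [Module (ZMod n) V]

lemma toAddSubgroup_span_zmod (s : Set V) :
    (Submodule.span (ZMod n) s).toAddSubgroup = AddSubgroup.closure s :=
  le_antisymm
    (show Submodule.span (ZMod n) s ≤ AddSubgroup.toZModSubmodule n (AddSubgroup.closure s) from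
      Submodule.span_le.2 AddSubgroup.subset_closure)
    ((AddSubgroup.closure_le _).2 Submodule.subset_span)

variable (n V) in
def submoduleOrderIsoSubgroup : Submodule (ZMod n) V ≃o Subgroup (Multiplicative V) :=
  (AddSubgroup.toZModSubmodule n).symm.trans AddSubgroup.toSubgroup

lemma submoduleOrderIsoSubgroup_span (s : Set V) :
    submoduleOrderIsoSubgroup n V (Submodule.span (ZMod n) s) =
      Subgroup.closure (Multiplicative.toAdd ⁻¹' s) := by
  rw [← AddSubgroup.toSubgroup_closure, ← toAddSubgroup_span_zmod (n := n)]
  rfl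

lemma closure_pair_eq_top_iff_span (x y : Multiplicative V) :
    Subgroup.closure {x, y} = ⊤ ↔ Submodule.span (ZMod n) {x.toAdd, y.toAdd} = ⊤ := by
  rw [← map_eq_top_iff (submoduleOrderIsoSubgroup n V), submoduleOrderIsoSubgroup_span]
  congr!

lemma zpowers_inf_zpowers_eq_bot_iff_span (x y : Multiplicative V) :
    Subgroup.zpowers x ⊓ Subgroup.zpowers y = ⊥ ↔
      (ZMod n ∙ x.toAdd) ⊓ (ZMod n ∙ y.toAdd) = ⊥ := by
  have zpowers_eq (g : Multiplicative V) :
      Subgroup.zpowers g = submoduleOrderIsoSubgroup n V (ZMod n ∙ g.toAdd) := by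
    rw [submoduleOrderIsoSubgroup_span, Subgroup.zpowers_eq_closure]
    congr!
  rw [zpowers_eq, zpowers_eq, ← OrderIso.map_inf, _root_.map_eq_bot_iff]

end ZModModule

lemma sigmaSet_eq_iUnion {G : Type*} [CommGroup G] (x y : G) :
    sigmaSet x y = ⋃ i, (Subgroup.zpowers (![x, y, x * y] i) : Set G) := by
  simp only [sigmaSet, mul_inv_cancel_comm, Set.image_id', Set.iUnion_const]
  ext g
  simp [Fin.exists_fin_succ, or_assoc]

lemma iUnion_inter_iUnion_eq_one_iff {ι κ : Type*} [Nonempty ι] [Nonempty κ]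
    (H : ι → Subgroup G) (L : κ → Subgroup G) :
    (⋃ i, (H i : Set G)) ∩ ⋃ j, (L j : Set G) = {1} ↔ ∀ i j, H i ⊓ L j = ⊥ := by
  simp only [Set.eq_singleton_iff_unique_mem, Subgroup.eq_bot_iff_forall, Subgroup.mem_inf,
    Set.mem_inter_iff, Set.mem_iUnion, SetLike.mem_coe]
  refine ⟨fun h i j g hg => h.2 g ⟨⟨i, hg.1⟩, ⟨j, hg.2⟩⟩, fun h => ⟨?_, ?_⟩⟩
  · exact ⟨⟨Classical.arbitrary ι, one_mem _⟩, ⟨Classical.arbitrary κ, one_mem _⟩⟩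
  · rintro g ⟨⟨i, hi⟩, ⟨j, hj⟩⟩
    exact h i j g ⟨hi, hj⟩

section PrimeField

variable {p : ℕ} [Fact p.Prime] {V : Type*} [AddCommGroup V] [Module (ZMod p) V]

lemma closure_pair_eq_top_iff_linearIndependent (hV : Module.finrank (ZMod p) V = 2)
    (x y : Multiplicative V) :
    Subgroup.closure {x, y} = ⊤ ↔ LinearIndependent (ZMod p) ![x.toAdd, y.toAdd] := by
  rw [closure_pair_eq_top_iff_span (n := p), linearIndependent_pair_iff_span_eq_top hV]

namespace IndepPair

def toTriple (b : IndepPair (ZMod p) V) :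
    Multiplicative V × Multiplicative V × Multiplicative V :=
  (.ofAdd b.x, .ofAdd b.y, (.ofAdd b.x * .ofAdd b.y)⁻¹)

lemma toTriple_injective : Function.Injective (toTriple (p := p) (V := V)) := fun _ _ h =>
  IndepPair.ext (congrArg (·.1) h) (congrArg (·.2.1) h)

lemma sigmaSet_inter_eq_one_iff (b b' : IndepPair (ZMod p) V) :
    sigmaSet (Multiplicative.ofAdd b.x) (Multiplicative.ofAdd b.y) ∩
        sigmaSet (Multiplicative.ofAdd b'.x) (Multiplicative.ofAdd b'.y) = {1} ↔
      Disjoint (Set.range b.points) (Set.range b'.points) := by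
  have ofAdd_vectors (b : IndepPair (ZMod p) V) :
      ![Multiplicative.ofAdd b.x, .ofAdd b.y, .ofAdd b.x * .ofAdd b.y] =
        fun i => Multiplicative.ofAdd (b.vectors i) := by
    funext i
    fin_cases i <;> rfl
  rw [sigmaSet_eq_iUnion, sigmaSet_eq_iUnion, ofAdd_vectors, ofAdd_vectors,
    iUnion_inter_iUnion_eq_one_iff, Set.disjoint_range_iff]
  exact forall₂_congr fun i j => (zpowers_inf_zpowers_eq_bot_iff_span (n := p) _ _).trans
    (span_singleton_inf_eq_bot_iff (b.vectors_ne_zero i) (b'.vectors_ne_zero j))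

end IndepPair

lemma beauvilleStructures_eq_image (hV : Module.finrank (ZMod p) V = 2) :
    beauvilleStructures (Multiplicative V) =
      Prod.map IndepPair.toTriple IndepPair.toTriple ''
        {bb : IndepPair (ZMod p) V × IndepPair (ZMod p) V |
          Disjoint (Set.range bb.1.points) (Set.range bb.2.points)} := by
  ext t
  constructor
  · rintro ⟨x₁, y₁, x₂, y₂, rfl, h₁, h₂, hsigma⟩
    rw [closure_pair_eq_top_iff_linearIndependent hV] at h₁ h₂
    exact ⟨(⟨_, _, h₁⟩, ⟨_, _, h₂⟩),
      (IndepPair.sigmaSet_inter_eq_one_iff _ _).1 hsigma, rfl⟩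
  · rintro ⟨⟨b, b'⟩, hbb, rfl⟩
    exact ⟨_, _, _, _, rfl,
      (closure_pair_eq_top_iff_linearIndependent hV _ _).2 b.linearIndependent,
      (closure_pair_eq_top_iff_linearIndependent hV _ _).2 b'.linearIndependent,
      (IndepPair.sigmaSet_inter_eq_one_iff b b').2 hbb⟩

end PrimeField

section Statements

theorem statement0_general (p : ℕ) (hp : p.Prime) :
    Nat.card (beauvilleStructures (Multiplicative (ZMod p × ZMod p))) =
      (p + 1) * p * (p - 1) ^ 3 * (p - 2) * (p - 3) * (p - 4) := by
  have : Fact p.Prime := ⟨hp⟩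
  have hV : Module.finrank (ZMod p) (ZMod p × ZMod p) = 2 := by simp
  rw [beauvilleStructures_eq_image hV, Nat.card_image_of_injective
      (IndepPair.toTriple_injective.prodMap IndepPair.toTriple_injective),
    Set.coe_ofPred, card_indepPair_prod_disjoint_points hV, Nat.card_units,
    Projectivization.card_of_finrank_two _ _ hV, Nat.card_zmod]
  simp only [Nat.descFactorial_succ, Nat.reduceSubDiff, add_tsub_cancel_right, tsub_zero,
    Nat.descFactorial_zero, mul_one]
  ring

theorem statement0 (p : ℕ) (hp : p.Prime) (hp5 : 5 ≤ p) :
    Nat.card (beauvilleStructures (Multiplicative (ZMod p × ZMod p))) =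
      (p + 1) * p * (p - 1) ^ 3 * (p - 2) * (p - 3) * (p - 4) :=
  statement0_general p hp

end Statements

end Beauville
end

section
/- Let p be an odd prime and let G = M(p,e,i) with generators a, b. Then the center of G is Z(G) = ⟨a^{p^{e−i}}, b^{p^{e−i}}⟩. -/
open Subgroup Equiv
open scoped commutatorElement

namespace Beauville

variable {G : Type*} [Group G]

/-!
Conjugation by `b` raises `a` to the power `r = 1 - p ^ i`, so every element of `M(p,e,i)` is
`a ^ s * b ^ t`, and `b ^ t` acts on `⟨a⟩` by `r ^ t`. For odd `p`, lifting the exponent gives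
`v_p(r ^ t - 1) = i + v_p(t)`, so `p ^ e ∣ r ^ t - 1` exactly when `p ^ (e - i) ∣ t`; this makes
`a ^ p ^ (e - i)` and `b ^ p ^ (e - i)` central. Conversely, `a ↦ (x ↦ x + 1)`, `b ↦ (x ↦ r x)`
is an action of `M(p,e,i)` on `ZMod (p ^ e)`, in which a central `a ^ s * b ^ t` must satisfy
`r ^ t = 1` (commuting with `a`) and `p ^ i s = 0` (commuting with `b`).
-/

theorem prime_pow_dvd_one_sub_pow_pow_sub_one_iff {p : ℕ} (hp : p.Prime) (hodd : Odd p)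
    {i : ℕ} (hi : 1 ≤ i) (e t : ℕ) :
    (p : ℤ) ^ e ∣ (1 - (p : ℤ) ^ i) ^ t - 1 ↔ p ^ (e - i) ∣ t := by
  have hpZ : Prime (p : ℤ) := Nat.prime_iff_prime_int.mp hp
  have hdvd : (p : ℤ) ∣ (1 - (p : ℤ) ^ i) - 1 := by
    rw [sub_sub_cancel_left]
    exact (dvd_pow_self _ (by omega)).neg_right
  have hndvd : ¬ (p : ℤ) ∣ 1 - (p : ℤ) ^ i := fun h =>
    hpZ.not_dvd_one (by simpa using h.add (dvd_pow_self (p : ℤ) (by omega : i ≠ 0)))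
  have lte := Int.emultiplicity_pow_sub_pow hp hodd hdvd hndvd t
  rw [one_pow, sub_sub_cancel_left, emultiplicity_neg,
    emultiplicity_pow_self_of_prime hpZ] at lte
  rw [pow_dvd_iff_le_emultiplicity, pow_dvd_iff_le_emultiplicity, lte]
  cases emultiplicity p t with
  | top => simp
  | coe m => norm_cast; omega

theorem pow_sub_dvd_of_pow_dvd_pow_mul {M : Type*} [CommMonoidWithZero M] [IsCancelMulZero M]
    {p : M} (hp : p ≠ 0) {e i : ℕ} {s : M} (h : p ^ e ∣ p ^ i * s) : p ^ (e - i) ∣ s := by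
  rcases le_total i e with hie | hei
  · rw [← Nat.add_sub_cancel' hie, pow_add] at h
    exact (mul_dvd_mul_iff_left (pow_ne_zero i hp)).1 h
  · rw [Nat.sub_eq_zero_of_le hei, pow_zero]
    exact one_dvd s

section Metacyclic

variable {a b : G} {r : ℤ}

theorem zpow_eq_zpow_of_dvd_sub {q : ℕ} (ha : a ^ q = 1) {m n : ℤ} (h : (q : ℤ) ∣ m - n) :
    a ^ m = a ^ n := by
  obtain ⟨k, hk⟩ := h
  rw [show m = n + q * k by linarith, zpow_add, zpow_mul, zpow_natCast, ha, one_zpow, mul_one]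

theorem pow_mul_zpow_mul_inv_pow (h : b * a * b⁻¹ = a ^ r) (n : ℕ) (s : ℤ) :
    b ^ n * a ^ s * (b ^ n)⁻¹ = a ^ (s * r ^ n) := by
  induction n with
  | zero => simp
  | succ n ih =>
    calc b ^ (n + 1) * a ^ s * (b ^ (n + 1))⁻¹ = b * (b ^ n * a ^ s * (b ^ n)⁻¹) * b⁻¹ := by
          group
      _ = (b * a * b⁻¹) ^ (s * r ^ n) := by rw [ih, conj_zpow]
      _ = a ^ (s * r ^ (n + 1)) := by rw [h, ← zpow_mul]; ring_nf

theorem pow_mul_zpow_mul_pow (h : b * a * b⁻¹ = a ^ r) (n t : ℕ) (s : ℤ) :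
    b ^ n * (a ^ s * b ^ t) = a ^ (s * r ^ n) * b ^ (n + t) := by
  rw [← pow_mul_zpow_mul_inv_pow h, pow_add]
  group

theorem exists_zpow_mul_pow_eq (hgen : closure {a, b} = ⊤) (h : b * a * b⁻¹ = a ^ r)
    {q : ℕ} (hq : 0 < q) (hb : b ^ q = 1) (g : G) : ∃ (s : ℤ) (t : ℕ), a ^ s * b ^ t = g := by
  have hb_inv : b⁻¹ = b ^ (q - 1) :=
    (eq_inv_of_mul_eq_one_left (by rw [← pow_succ, Nat.sub_add_cancel hq, hb])).symm
  have hg : g ∈ closure {a, b} := hgen ▸ mem_top g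
  induction hg using closure_induction_left with
  | one => exact ⟨0, 0, by simp⟩
  | mul_left x hx y _ ih =>
    obtain ⟨s, t, rfl⟩ := ih
    rcases hx with rfl | rfl
    · exact ⟨s + 1, t, by group⟩
    · exact ⟨s * r ^ 1, 1 + t, (pow_one x ▸ pow_mul_zpow_mul_pow h 1 t s).symm⟩
  | inv_mul_cancel x hx y _ ih =>
    obtain ⟨s, t, rfl⟩ := ih
    rcases hx with rfl | rfl
    · exact ⟨s - 1, t, by group⟩
    · exact ⟨s * r ^ (q - 1), q - 1 + t, by rw [hb_inv, pow_mul_zpow_mul_pow h]⟩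

theorem mem_center_of_commute (hgen : closure {a, b} = ⊤) {g : G} (ha : Commute a g)
    (hb : Commute b g) : g ∈ center G := by
  rw [← centralizer_univ, ← coe_top, ← hgen, centralizer_closure]
  rintro x (rfl | rfl)
  exacts [ha.eq, hb.eq]

end Metacyclic

section MGroup

variable {p e i : ℕ}

theorem mk_fA : PresentedGroup.mk (MRels p e i) fA = ma p e i := rfl

theorem mk_fB : PresentedGroup.mk (MRels p e i) fB = mb p e i := rfl

theorem ma_pow_eq_one : ma p e i ^ p ^ e = 1 := by
  simpa [mk_fA] using PresentedGroup.one_of_mem (rels := MRels p e i) (Set.mem_insert _ _)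

theorem mb_pow_eq_one : mb p e i ^ p ^ e = 1 := by
  simpa [mk_fB] using PresentedGroup.one_of_mem (rels := MRels p e i)
    (Set.mem_insert_of_mem _ (Set.mem_insert _ _))

theorem commutator_ma_mb : ⁅ma p e i, mb p e i⁆ = ma p e i ^ p ^ i := by
  simpa [mk_fA, mk_fB, mul_inv_eq_one] using PresentedGroup.one_of_mem (rels := MRels p e i)
    (Set.mem_insert_of_mem _ (Set.mem_insert_of_mem _ rfl))

theorem mb_mul_ma_mul_mb_inv :
    mb p e i * ma p e i * (mb p e i)⁻¹ = ma p e i ^ (1 - (p : ℤ) ^ i) := by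
  have h := commutator_ma_mb (p := p) (e := e) (i := i)
  rw [commutatorElement_def] at h
  rw [sub_eq_neg_add, zpow_add, zpow_neg, zpow_one, ← Int.natCast_pow, zpow_natCast, ← h]
  group

theorem closure_ma_mb : closure {ma p e i, mb p e i} = ⊤ := by
  rw [← PresentedGroup.closure_range_of]
  congr 1
  ext x
  simp [ma, mb, or_comm]

theorem ma_pow_mem_center : ma p e i ^ p ^ (e - i) ∈ center (MGroup p e i) := by
  refine mem_center_of_commute closure_ma_mb (Commute.self_pow _ _) (mul_inv_eq_iff_eq_mul.1 ?_)
  have hdvd : ((p ^ e : ℕ) : ℤ) ∣ (p ^ (e - i) : ℕ) * (1 - (p : ℤ) ^ i) - (p ^ (e - i) : ℕ) := by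
    rw [mul_one_sub, sub_sub_cancel_left, dvd_neg]
    exact_mod_cast (pow_dvd_pow p (by omega : e ≤ e - i + i)).trans (pow_add p _ _).dvd
  have h := pow_mul_zpow_mul_inv_pow (mb_mul_ma_mul_mb_inv (p := p) (e := e) (i := i)) 1
    ((p ^ (e - i) : ℕ) : ℤ)
  rwa [pow_one, pow_one, zpow_eq_zpow_of_dvd_sub ma_pow_eq_one hdvd, zpow_natCast] at h

theorem mb_pow_mem_center (hp : p.Prime) (hodd : Odd p) (hi : 1 ≤ i) :
    mb p e i ^ p ^ (e - i) ∈ center (MGroup p e i) := by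
  refine mem_center_of_commute closure_ma_mb (Eq.symm (mul_inv_eq_iff_eq_mul.1 ?_))
    (Commute.self_pow _ _)
  have hdvd := (prime_pow_dvd_one_sub_pow_pow_sub_one_iff hp hodd hi e _).2 dvd_rfl
  have h := pow_mul_zpow_mul_inv_pow (mb_mul_ma_mul_mb_inv (p := p) (e := e) (i := i))
    (p ^ (e - i)) 1
  rwa [zpow_one, one_mul, zpow_eq_zpow_of_dvd_sub ma_pow_eq_one (by exact_mod_cast hdvd),
    zpow_one] at h

end MGroup

section AffineRep

variable {R : Type*} [CommRing R] {p e i : ℕ}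

def affineRep (u : Rˣ) (hq : (p : R) ^ e = 0) (hu : u ^ p ^ e = 1)
    (hui : (u : R) = 1 - (p : R) ^ i) : MGroup p e i →* Equiv.Perm R :=
  PresentedGroup.toGroup (f := fun x => bif x then Equiv.addRight 1 else MulAction.toPerm u) <| by
    rintro r (rfl | rfl | rfl)
    · ext x
      simp [fA, hq]
    · simp only [fB, map_pow, FreeGroup.lift_apply_of, cond_false]
      rw [← MulAction.toPermHom_apply, ← map_pow, hu, map_one]
    · ext x
      simp [fA, fB, commutatorElement_def, Units.smul_def]
      rw [hui]
      ring

variable {u : Rˣ} {hq : (p : R) ^ e = 0} {hu : u ^ p ^ e = 1} {hui : (u : R) = 1 - (p : R) ^ i}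

theorem affineRep_ma : affineRep u hq hu hui (ma p e i) = Equiv.addRight 1 :=
  PresentedGroup.toGroup.of _

theorem affineRep_mb : affineRep u hq hu hui (mb p e i) = MulAction.toPerm u :=
  PresentedGroup.toGroup.of _

theorem affineRep_zpow_mul_pow (s : ℤ) (t : ℕ) (x : R) :
    affineRep u hq hu hui (ma p e i ^ s * mb p e i ^ t) x = u ^ t * x + s := by
  rw [map_mul, map_zpow, map_pow, affineRep_ma, affineRep_mb, Equiv.Perm.mul_apply,
    Equiv.zsmul_addRight, ← MulAction.toPermHom_apply, ← map_pow]
  simp [Units.smul_def]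

end AffineRep

section Center

variable {R : Type*} [CommRing R] {p e i : ℕ}

theorem affineRep_eq_of_mem_center (u : Rˣ) (hq : (p : R) ^ e = 0) (hu : u ^ p ^ e = 1)
    (hui : (u : R) = 1 - (p : R) ^ i) {s : ℤ} {t : ℕ}
    (h : ma p e i ^ s * mb p e i ^ t ∈ center (MGroup p e i)) :
    (u : R) ^ t = 1 ∧ (p : R) ^ i * s = 0 := by
  have hcomm (y : MGroup p e i) :
      (affineRep u hq hu hui y * affineRep u hq hu hui (ma p e i ^ s * mb p e i ^ t)) 0 =
        (affineRep u hq hu hui (ma p e i ^ s * mb p e i ^ t) * affineRep u hq hu hui y) 0 := by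
    rw [← map_mul, ← map_mul, mem_center_iff.1 h y]
  have ha := hcomm (ma p e i)
  have hb := hcomm (mb p e i)
  simp only [Equiv.Perm.mul_apply, affineRep_zpow_mul_pow, affineRep_ma, affineRep_mb,
    Equiv.coe_addRight, MulAction.toPerm_apply, Units.smul_def] at ha hb
  constructor
  · linear_combination -ha
  · linear_combination -hb + s * hui

theorem one_sub_pow_pow_eq_one_iff (hp : p.Prime) (hodd : Odd p) (hi : 1 ≤ i) (t : ℕ) :
    (1 - (p : ZMod (p ^ e)) ^ i) ^ t = 1 ↔ p ^ (e - i) ∣ t := by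
  rw [← prime_pow_dvd_one_sub_pow_pow_sub_one_iff hp hodd hi, ← sub_eq_zero]
  exact_mod_cast ZMod.intCast_zmod_eq_zero_iff_dvd ((1 - (p : ℤ) ^ i) ^ t - 1) (p ^ e)

theorem dvd_of_zpow_mul_pow_mem_center (hp : p.Prime) (hodd : Odd p) (hi : 1 ≤ i) {s : ℤ}
    {t : ℕ} (h : ma p e i ^ s * mb p e i ^ t ∈ center (MGroup p e i)) :
    (p : ℤ) ^ (e - i) ∣ s ∧ p ^ (e - i) ∣ t := by
  have hq : (p : ZMod (p ^ e)) ^ e = 0 := by exact_mod_cast ZMod.natCast_self (p ^ e)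
  have hpow := one_sub_pow_pow_eq_one_iff (e := e) hp hodd hi
  have hpow_eq_one := (hpow (p ^ e)).2 (pow_dvd_pow p (Nat.sub_le e i))
  have hunit : IsUnit (1 - (p : ZMod (p ^ e)) ^ i) :=
    .of_pow_eq_one hpow_eq_one (pow_ne_zero e hp.ne_zero)
  obtain ⟨ht, hs⟩ := affineRep_eq_of_mem_center _ hq (Units.ext (by simpa using hpow_eq_one))
    hunit.unit_spec h
  rw [IsUnit.unit_spec] at ht
  refine ⟨pow_sub_dvd_of_pow_dvd_pow_mul (by exact_mod_cast hp.ne_zero) ?_, (hpow t).1 ht⟩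
  exact_mod_cast (ZMod.intCast_zmod_eq_zero_iff_dvd ((p : ℤ) ^ i * s) (p ^ e)).1
    (by exact_mod_cast hs)

end Center

theorem statement2_general (p e i : ℕ) (hp : p.Prime) (hodd : Odd p) (h1 : 1 ≤ i) :
    Subgroup.center (MGroup p e i) =
      Subgroup.closure {ma p e i ^ p ^ (e - i), mb p e i ^ p ^ (e - i)} := by
  refine le_antisymm (fun g hg => ?_) ((closure_le _).2 ?_)
  · obtain ⟨s, t, rfl⟩ := exists_zpow_mul_pow_eq closure_ma_mb mb_mul_ma_mul_mb_inv
      (pow_pos hp.pos e) mb_pow_eq_one g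
    obtain ⟨⟨s', rfl⟩, ⟨t', rfl⟩⟩ := dvd_of_zpow_mul_pow_mem_center hp hodd h1 hg
    rw [← Int.natCast_pow, zpow_mul, zpow_natCast, pow_mul]
    exact mul_mem (zpow_mem (subset_closure (.inl rfl)) s') (pow_mem (subset_closure (.inr rfl)) t')
  · rintro x (rfl | rfl)
    exacts [ma_pow_mem_center, mb_pow_mem_center hp hodd h1]

theorem statement2 (p e i : ℕ) (hp : p.Prime) (hodd : Odd p) (h1 : 1 ≤ i) (h2 : i ≤ e - 1) :
    Subgroup.center (MGroup p e i) =
      Subgroup.closure {ma p e i ^ p ^ (e - i), mb p e i ^ p ^ (e - i)} :=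
  statement2_general p e i hp hodd h1

end Beauville
end

section
/- Let p be an odd prime and let G = H(p,e,i,j,k) with generators a, b. A map θ defined on the generators extends to an inner automorphism of G if and only if θ(a) = a·c_a and θ(b) = b·c_b for some c_a, c_b ∈ G′ (the commutator subgroup); moreover every such choice of c_a, c_b ∈ G′ yields an inner automorphism. -/
open Subgroup Equiv

namespace Beauville

variable {G : Type*} [Group G]

/-!
In a group generated by `a` and `b` in which `c = ⁅b, a⁆` commutes with `a` and `b`, the element
`c` is central, and `G ⧸ ⟨c⟩` is generated by two commuting elements, hence abelian; so
`G' = ⟨c⟩`. Since `c` is central, `⁅b ^ m, a⁆ = c ^ m` and `⁅a ^ (-n), b⁆ = c ^ n`, so conjugation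
by `a ^ (-n) * b ^ m` sends `a ↦ a * c ^ m` and `b ↦ b * c ^ n`: every choice `(a * ca, b * cb)`
with `ca, cb ∈ G'` is realised by an inner automorphism, unique because `a` and `b` generate `G`.
Conversely `g * x * g⁻¹ = x * ⁅x⁻¹, g⁆` for every `x`.
-/

open scoped commutatorElement

section TwoGenerated

variable {a b : G}

theorem normal_of_le_center {H : Subgroup G} (h : H ≤ center G) : H.Normal where
  conj_mem n hn g := by rw [mem_center_iff.1 (h hn) g, mul_inv_cancel_right]; exact hn

theorem mem_center_of_closure_pair_eq_top {z : G} (hab : closure {a, b} = ⊤)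
    (ha : Commute z a) (hb : Commute z b) : z ∈ center G := by
  rw [center_eq_iInf hab]
  simp only [Set.mem_insert_iff, Set.mem_singleton_iff, mem_iInf, mem_centralizer_singleton_iff]
  rintro g (rfl | rfl)
  exacts [ha.eq, hb.eq]

theorem commute_of_closure_pair_eq_top (hab : closure {a, b} = ⊤) (h : Commute a b)
    (x y : G) : Commute x y := by
  have : IsMulCommutative (closure ({a, b} : Set G)) := isMulCommutative_closure <| by
    simp only [Set.mem_insert_iff, Set.mem_singleton_iff]
    rintro _ (rfl | rfl) _ (rfl | rfl)
    exacts [rfl, h.eq, h.eq.symm, rfl]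
  exact setLike_mul_comm (hab ▸ mem_top x) (hab ▸ mem_top y)

theorem commutator_le_zpowers_of_closure_pair_eq_top (hab : closure {a, b} = ⊤)
    (hc : ⁅b, a⁆ ∈ center G) : commutator G ≤ zpowers ⁅b, a⁆ := by
  have := normal_of_le_center (zpowers_le.2 hc)
  set π := QuotientGroup.mk' (zpowers ⁅b, a⁆)
  have hπ : closure {π a, π b} = ⊤ := by
    rw [← Set.image_pair, ← MonoidHom.map_closure, hab,
      map_top_of_surjective _ (QuotientGroup.mk'_surjective _)]
  have hcomm : Commute (π b) (π a) := by
    rw [← commutatorElement_eq_one_iff_commute, ← map_commutatorElement,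
      QuotientGroup.mk'_apply, QuotientGroup.eq_one_iff]
    exact mem_zpowers _
  rw [← Normal.quotient_commutative_iff_commutator_le]
  exact ⟨⟨fun x y => (commute_of_closure_pair_eq_top hπ hcomm.symm x y).eq⟩⟩

theorem commutatorElement_zpow_left {g x : G} (h : ⁅g, x⁆ ∈ center G) (m : ℤ) :
    ⁅g ^ m, x⁆ = ⁅g, x⁆ ^ m := by
  have hcomm : Commute ⁅x, g⁆ g := by
    rw [← commutatorElement_inv]; exact (mem_center_iff.1 (inv_mem h) g).symm
  have hconj : x * g ^ m * x⁻¹ = ⁅x, g⁆ ^ m * g ^ m := by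
    rw [← conj_zpow, ← hcomm.mul_zpow, commutatorElement_def]; group
  calc ⁅g ^ m, x⁆ = g ^ m * (x * g ^ m * x⁻¹)⁻¹ := by rw [commutatorElement_def]; group
    _ = (⁅x, g⁆⁻¹) ^ m := by rw [hconj, mul_inv_rev, mul_inv_cancel_left, inv_zpow]
    _ = ⁅g, x⁆ ^ m := by rw [commutatorElement_inv]

theorem conj_eq_mul_commutatorElement {g x : G} (h : ⁅g, x⁆ ∈ center G) :
    g * x * g⁻¹ = x * ⁅g, x⁆ := by
  rw [mem_center_iff.1 h x, commutatorElement_def]; group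

theorem exists_mem_innAut_apply_eq_mul_zpow (hc : ⁅b, a⁆ ∈ center G) (m n : ℤ) :
    ∃ θ ∈ innAut G, θ a = a * ⁅b, a⁆ ^ m ∧ θ b = b * ⁅b, a⁆ ^ n := by
  have hc' : ⁅a, b⁆ ∈ center G := commutatorElement_inv b a ▸ inv_mem hc
  have hbm : ⁅b ^ m, a⁆ = ⁅b, a⁆ ^ m := commutatorElement_zpow_left hc m
  have han : ⁅a ^ (-n), b⁆ = ⁅b, a⁆ ^ n := by
    rw [commutatorElement_zpow_left hc', ← commutatorElement_inv, inv_zpow, zpow_neg, inv_inv]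
  refine ⟨MulAut.conj (a ^ (-n) * b ^ m), ⟨_, rfl⟩, ?_, ?_⟩
  · calc MulAut.conj (a ^ (-n) * b ^ m) a
          = a ^ (-n) * (b ^ m * a * (b ^ m)⁻¹) * (a ^ (-n))⁻¹ := by
          rw [MulAut.conj_apply]; group
      _ = a ^ (-n) * a * (a ^ (-n))⁻¹ * (a ^ (-n) * ⁅b, a⁆ ^ m * (a ^ (-n))⁻¹) := by
          rw [conj_eq_mul_commutatorElement (g := b ^ m) (hbm ▸ zpow_mem hc m), hbm]; group
      _ = a * ⁅b, a⁆ ^ m := by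
          rw [mem_center_iff.1 (zpow_mem hc m), mul_inv_cancel_right]; group
  · calc MulAut.conj (a ^ (-n) * b ^ m) b = a ^ (-n) * b * (a ^ (-n))⁻¹ := by
          rw [MulAut.conj_apply]; group
      _ = b * ⁅b, a⁆ ^ n := by rw [conj_eq_mul_commutatorElement (han ▸ zpow_mem hc n), han]

theorem exists_mem_innAut_apply_eq_mul (hab : closure {a, b} = ⊤) (hc : ⁅b, a⁆ ∈ center G)
    {ca cb : G} (hca : ca ∈ commutator G) (hcb : cb ∈ commutator G) :
    ∃ θ ∈ innAut G, θ a = a * ca ∧ θ b = b * cb := by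
  obtain ⟨m, rfl⟩ := mem_zpowers_iff.1 (commutator_le_zpowers_of_closure_pair_eq_top hab hc hca)
  obtain ⟨n, rfl⟩ := mem_zpowers_iff.1 (commutator_le_zpowers_of_closure_pair_eq_top hab hc hcb)
  exact exists_mem_innAut_apply_eq_mul_zpow hc m n

theorem inv_mul_apply_mem_commutator_of_mem_innAut {θ : MulAut G} (hθ : θ ∈ innAut G) (x : G) :
    x⁻¹ * θ x ∈ commutator G := by
  obtain ⟨g, rfl⟩ := hθ
  have : x⁻¹ * MulAut.conj g x = ⁅x⁻¹, g⁆ := by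
    rw [MulAut.conj_apply, commutatorElement_def]; group
  rw [this, commutator_def]
  exact commutator_mem_commutator (mem_top _) (mem_top _)

theorem mulAut_ext_of_closure_eq_top {s : Set G} (hs : closure s = ⊤) {θ θ' : MulAut G}
    (h : s.EqOn θ θ') : θ = θ' :=
  MulEquiv.toMonoidHom_injective (MonoidHom.eq_of_eqOn_dense hs h)

theorem mem_innAut_iff_exists_apply_eq_mul (hab : closure {a, b} = ⊤) (hc : ⁅b, a⁆ ∈ center G)
    (θ : MulAut G) : θ ∈ innAut G ↔
      ∃ ca ∈ commutator G, ∃ cb ∈ commutator G, θ a = a * ca ∧ θ b = b * cb := by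
  refine ⟨fun hθ => ⟨_, inv_mul_apply_mem_commutator_of_mem_innAut hθ a,
    _, inv_mul_apply_mem_commutator_of_mem_innAut hθ b,
    (mul_inv_cancel_left _ _).symm, (mul_inv_cancel_left _ _).symm⟩, ?_⟩
  rintro ⟨ca, hca, cb, hcb, hθa, hθb⟩
  obtain ⟨θ', hθ', hθ'a, hθ'b⟩ := exists_mem_innAut_apply_eq_mul hab hc hca hcb
  convert hθ'
  refine mulAut_ext_of_closure_eq_top hab ?_
  rintro _ (rfl | rfl)
  exacts [hθa.trans hθ'a.symm, hθb.trans hθ'b.symm]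

end TwoGenerated

theorem closure_ha_hb_eq_top (p e i j k : ℕ) : closure {ha p e i j k, hb p e i j k} = ⊤ := by
  rw [← PresentedGroup.closure_range_of (HRels p e i j k)]
  congr 1
  ext x
  simp [ha, hb, or_comm]

theorem commutatorElement_hb_ha_mem_center (p e i j k : ℕ) :
    ⁅hb p e i j k, ha p e i j k⁆ ∈ center (HGroup p e i j k) := by
  have relation {x : Bool} (h : ⁅⁅fB, fA⁆, FreeGroup.of x⁆ ∈ HRels p e i j k) :
      Commute ⁅hb p e i j k, ha p e i j k⁆ (PresentedGroup.of x) := by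
    rw [← commutatorElement_eq_one_iff_commute]
    exact (map_commutatorElement (PresentedGroup.mk _) _ _).symm.trans (PresentedGroup.one_of_mem h)
  exact mem_center_of_closure_pair_eq_top (closure_ha_hb_eq_top p e i j k)
    (relation (x := true) (by simp [HRels, fA])) (relation (x := false) (by simp [HRels, fB]))

section Statements

theorem statement8_general (p e i j k : ℕ) :
    (∀ θ : MulAut (HGroup p e i j k),
      θ ∈ innAut (HGroup p e i j k) ↔
      ∃ ca ∈ commutator (HGroup p e i j k), ∃ cb ∈ commutator (HGroup p e i j k),
        θ (ha p e i j k) = ha p e i j k * ca ∧ θ (hb p e i j k) = hb p e i j k * cb) ∧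
    (∀ ca ∈ commutator (HGroup p e i j k), ∀ cb ∈ commutator (HGroup p e i j k),
      ∃ θ ∈ innAut (HGroup p e i j k),
        θ (ha p e i j k) = ha p e i j k * ca ∧ θ (hb p e i j k) = hb p e i j k * cb) :=
  ⟨mem_innAut_iff_exists_apply_eq_mul (closure_ha_hb_eq_top p e i j k)
      (commutatorElement_hb_ha_mem_center p e i j k),
    fun _ hca _ hcb => exists_mem_innAut_apply_eq_mul (closure_ha_hb_eq_top p e i j k)
      (commutatorElement_hb_ha_mem_center p e i j k) hca hcb⟩

theorem statement8 (p e i j k : ℕ) (hp : p.Prime) (hodd : Odd p)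
    (hk : 0 < k) (hkj : k < j) (hji : j ≤ i) (hie : i ≤ e) (he : e = i + j - k) :
    (∀ θ : MulAut (HGroup p e i j k),
      θ ∈ innAut (HGroup p e i j k) ↔
      ∃ ca ∈ commutator (HGroup p e i j k), ∃ cb ∈ commutator (HGroup p e i j k),
        θ (ha p e i j k) = ha p e i j k * ca ∧ θ (hb p e i j k) = hb p e i j k * cb) ∧
    (∀ ca ∈ commutator (HGroup p e i j k), ∀ cb ∈ commutator (HGroup p e i j k),
      ∃ θ ∈ innAut (HGroup p e i j k),
        θ (ha p e i j k) = ha p e i j k * ca ∧ θ (hb p e i j k) = hb p e i j k * cb) :=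
  statement8_general p e i j k

end Statements

end Beauville
end

section
/- Let p be an odd prime and let G = K(p,e,j). Then Z(G) = G^{p^j}·G′, where G^{p^j} is the subgroup generated by all p^j-th powers of elements of G and G′ is the commutator subgroup of G. Consequently, |Z(G)| = p^{2e−j}. -/
open Subgroup Equiv
open scoped commutatorElement

namespace Beauville

variable {G : Type*} [Group G]

section Statements


/-!
`K(p,e,j)` is isomorphic to the group `HeisMod (p ^ e) (p ^ j)` of triples
`(x, y, z) ∈ ℤ/p^e × ℤ/p^e × ℤ/p^j` with
`(x, y, z) (x', y', z') = (x + x', y + y', z + z' + x' y)`, the triple standing for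
`a ^ x * b ^ y * ⁅b, a⁆ ^ z`. The relations of `K` hold in this model, and
conversely the normal form defines a homomorphism out of the model because `⁅b, a⁆` is central
in `K`. In the model, `(x, y, z)` is central iff `x ≡ y ≡ 0 mod p ^ j`, i.e. iff it lies in the
kernel of the surjection onto `(ℤ/p^j)²`. That kernel contains all `p ^ j`-th powers and all
commutators, and is generated by `a ^ p ^ j`, `b ^ p ^ j` and `⁅b, a⁆`; its order is
`p ^ (2e + j) / p ^ (2j)`.
-/

section ClassTwo

variable {a b : G}

lemma pow_mul_pow_eq_of_commute_commutatorElement (hca : Commute ⁅b, a⁆ a)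
    (hcb : Commute ⁅b, a⁆ b) (m n : ℕ) :
    b ^ m * a ^ n = a ^ n * b ^ m * ⁅b, a⁆ ^ (n * m) := by
  have hconj : b * a * b⁻¹ = ⁅b, a⁆ * a := by rw [commutatorElement_def]; group
  generalize ⁅b, a⁆ = c at hca hcb hconj ⊢
  have hconj_pow (m : ℕ) : b ^ m * a * (b ^ m)⁻¹ = c ^ m * a := by
    induction m with
    | zero => simp
    | succ m ih =>
      calc b ^ (m + 1) * a * (b ^ (m + 1))⁻¹
            = b * (b ^ m * a * (b ^ m)⁻¹) * b⁻¹ := by group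
        _ = b * c ^ m * a * b⁻¹ := by rw [ih]; group
        _ = c ^ m * (b * a * b⁻¹) := by rw [← (hcb.pow_left m).eq]; group
        _ = c ^ (m + 1) * a := by rw [hconj]; group
  have hconj_pow_pow : b ^ m * a ^ n * (b ^ m)⁻¹ = c ^ (n * m) * a ^ n := by
    rw [← conj_pow, hconj_pow, (hca.pow_left m).mul_pow, ← pow_mul, mul_comm m]
  calc b ^ m * a ^ n = b ^ m * a ^ n * (b ^ m)⁻¹ * b ^ m := by group
    _ = c ^ (n * m) * (a ^ n * b ^ m) := by rw [hconj_pow_pow, mul_assoc]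
    _ = a ^ n * b ^ m * c ^ (n * m) := ((hca.pow_pow _ _).mul_right (hcb.pow_pow _ _)).eq

lemma pow_mul_pow_mul_pow_mul_eq_of_commute_commutatorElement (hca : Commute ⁅b, a⁆ a)
    (hcb : Commute ⁅b, a⁆ b) (x₁ y₁ z₁ x₂ y₂ z₂ : ℕ) :
    a ^ x₁ * b ^ y₁ * ⁅b, a⁆ ^ z₁ * (a ^ x₂ * b ^ y₂ * ⁅b, a⁆ ^ z₂) =
      a ^ (x₁ + x₂) * b ^ (y₁ + y₂) * ⁅b, a⁆ ^ (x₂ * y₁ + z₁ + z₂) := by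
  have hba := pow_mul_pow_eq_of_commute_commutatorElement hca hcb y₁ x₂
  generalize ⁅b, a⁆ = c at hca hcb hba ⊢
  have hc : Commute (c ^ z₁) (a ^ x₂ * b ^ y₂ * c ^ z₂) :=
    ((hca.pow_pow _ _).mul_right (hcb.pow_pow _ _)).mul_right (Commute.pow_pow_self c _ _)
  calc a ^ x₁ * b ^ y₁ * c ^ z₁ * (a ^ x₂ * b ^ y₂ * c ^ z₂)
      = a ^ x₁ * (b ^ y₁ * a ^ x₂) * b ^ y₂ * c ^ (z₁ + z₂) := by
        rw [mul_assoc _ (c ^ z₁), hc.eq]; group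
    _ = a ^ (x₁ + x₂) * b ^ y₁ * (c ^ (x₂ * y₁) * b ^ y₂) * c ^ (z₁ + z₂) := by
        rw [hba]; group
    _ = a ^ (x₁ + x₂) * b ^ (y₁ + y₂) * c ^ (x₂ * y₁ + z₁ + z₂) := by
        rw [(hcb.pow_pow _ _).eq]; group

end ClassTwo

lemma pow_zmodVal_eq {g : G} {n : ℕ} (hg : g ^ n = 1) {u : ZMod n} {m : ℕ}
    (hu : (m : ZMod n) = u) : g ^ u.val = g ^ m := by
  rw [← hu, ZMod.val_natCast, ← pow_eq_pow_mod m hg]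

section MulEquiv

variable {H : Type*} [Group H]

lemma map_center_of_mulEquiv (f : G ≃* H) : (center G).map f.toMonoidHom = center H := by
  ext h
  rw [mem_map_equiv, mem_center_iff, mem_center_iff, f.symm.surjective.forall]
  simp only [← map_mul, f.symm.injective.eq_iff]

lemma map_powSubgroup_of_surjective (f : G →* H) (hf : Function.Surjective f) (n : ℕ) :
    (powSubgroup G n).map f = powSubgroup H n := by
  rw [powSubgroup, powSubgroup, MonoidHom.map_closure, ← Set.range_comp]
  simp only [Function.comp_def, map_pow]
  rw [← hf.range_comp (· ^ n)]
  rfl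

lemma map_commutator_of_surjective (f : G →* H) (hf : Function.Surjective f) :
    (commutator G).map f = commutator H := by
  rw [commutator_def, commutator_def, map_commutator, map_top_of_surjective f hf]

lemma center_eq_powSubgroup_sup_commutator_of_mulEquiv (f : G ≃* H) (n : ℕ)
    (h : center H = powSubgroup H n ⊔ commutator H) :
    center G = powSubgroup G n ⊔ commutator G :=
  map_injective (f := f.toMonoidHom) f.injective <| by
    rw [map_center_of_mulEquiv, Subgroup.map_sup, map_powSubgroup_of_surjective _ f.surjective,
      map_commutator_of_surjective _ f.surjective, h]

end MulEquiv

@[ext] structure HeisMod (N J : ℕ) : Type where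
  x : ZMod N
  y : ZMod N
  z : ZMod J

namespace HeisMod

variable {N J : ℕ}

instance : One (HeisMod N J) := ⟨⟨0, 0, 0⟩⟩

@[simp] lemma one_x : (1 : HeisMod N J).x = 0 := rfl
@[simp] lemma one_y : (1 : HeisMod N J).y = 0 := rfl
@[simp] lemma one_z : (1 : HeisMod N J).z = 0 := rfl

variable [Fact (J ∣ N)]

def red (N J : ℕ) [Fact (J ∣ N)] : ZMod N →+* ZMod J := ZMod.castHom Fact.out (ZMod J)

instance : Mul (HeisMod N J) :=
  ⟨fun g h => ⟨g.x + h.x, g.y + h.y, g.z + h.z + red N J h.x * red N J g.y⟩⟩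
instance : Inv (HeisMod N J) := ⟨fun g => ⟨-g.x, -g.y, -g.z + red N J g.x * red N J g.y⟩⟩

@[simp] lemma mul_x (g h : HeisMod N J) : (g * h).x = g.x + h.x := rfl
@[simp] lemma mul_y (g h : HeisMod N J) : (g * h).y = g.y + h.y := rfl
@[simp] lemma mul_z (g h : HeisMod N J) : (g * h).z = g.z + h.z + red N J h.x * red N J g.y :=
  rfl
@[simp] lemma inv_x (g : HeisMod N J) : g⁻¹.x = -g.x := rfl
@[simp] lemma inv_y (g : HeisMod N J) : g⁻¹.y = -g.y := rfl
@[simp] lemma inv_z (g : HeisMod N J) : g⁻¹.z = -g.z + red N J g.x * red N J g.y := rfl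

instance : Group (HeisMod N J) where
  mul_assoc a b c := by ext <;> simp <;> ring
  one_mul a := by ext <;> simp
  mul_one a := by ext <;> simp
  inv_mul_cancel a := by ext <;> simp

def A : HeisMod N J := ⟨1, 0, 0⟩
def B : HeisMod N J := ⟨0, 1, 0⟩
def C : HeisMod N J := ⟨0, 0, 1⟩

lemma commutatorElement_B_A : ⁅(B : HeisMod N J), (A : HeisMod N J)⁆ = C := by
  ext <;> simp [commutatorElement_def, A, B, C]

lemma C_commute (g : HeisMod N J) : Commute C g := by
  ext <;> simp [C, add_comm]

lemma A_pow (n : ℕ) : (A : HeisMod N J) ^ n = ⟨n, 0, 0⟩ := by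
  induction n with
  | zero => ext <;> simp
  | succ n ih => rw [pow_succ, ih]; ext <;> simp [A]

lemma B_pow (n : ℕ) : (B : HeisMod N J) ^ n = ⟨0, n, 0⟩ := by
  induction n with
  | zero => ext <;> simp
  | succ n ih => rw [pow_succ, ih]; ext <;> simp [B]

lemma C_pow (n : ℕ) : (C : HeisMod N J) ^ n = ⟨0, 0, n⟩ := by
  induction n with
  | zero => ext <;> simp
  | succ n ih => rw [pow_succ, ih]; ext <;> simp [C]

lemma A_pow_mul_B_pow_mul_C_pow (x y z : ℕ) :
    (A : HeisMod N J) ^ x * B ^ y * C ^ z = ⟨x, y, z⟩ := by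
  ext <;> simp [A_pow, B_pow, C_pow]

lemma mem_center_iff {g : HeisMod N J} :
    g ∈ center (HeisMod N J) ↔ red N J g.x = 0 ∧ red N J g.y = 0 := by
  rw [Subgroup.mem_center_iff]
  refine ⟨fun h => ⟨?_, ?_⟩, fun ⟨hx, hy⟩ k => ?_⟩
  · simpa [B] using (congrArg HeisMod.z (h B)).symm
  · simpa [A] using congrArg HeisMod.z (h A)
  · ext <;> simp [hx, hy, add_comm]

def outerHom : HeisMod N J →* Multiplicative (ZMod J × ZMod J) where
  toFun g := Multiplicative.ofAdd (red N J g.x, red N J g.y)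
  map_one' := by simp
  map_mul' g h := by simp only [mul_x, mul_y, map_add]; rfl

lemma outerHom_surjective : Function.Surjective (outerHom : HeisMod N J →* _) := by
  intro u
  obtain ⟨x, hx⟩ := ZMod.ringHom_surjective (red N J) u.toAdd.1
  obtain ⟨y, hy⟩ := ZMod.ringHom_surjective (red N J) u.toAdd.2
  exact ⟨⟨x, y, 0⟩, by simp [outerHom, hx, hy]⟩

lemma ker_outerHom : (outerHom : HeisMod N J →* _).ker = center (HeisMod N J) := by
  ext g
  simp [mem_center_iff, outerHom, Prod.ext_iff]

variable [NeZero N]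

lemma red_apply (x : ZMod N) : red N J x = x.val := by
  rw [red, ZMod.castHom_apply, ZMod.cast_eq_val]

lemma red_eq_zero_iff (x : ZMod N) : red N J x = 0 ↔ ∃ t : ℕ, x = (J * t : ℕ) := by
  refine ⟨fun h => ?_, ?_⟩
  · rw [red_apply, ZMod.natCast_eq_zero_iff] at h
    obtain ⟨t, ht⟩ := h
    exact ⟨t, by rw [← ht, ZMod.natCast_zmod_val]⟩
  · rintro ⟨t, rfl⟩
    simp

variable [NeZero J]

lemma center_eq_powSubgroup_sup_commutator :
    center (HeisMod N J) = powSubgroup (HeisMod N J) J ⊔ commutator (HeisMod N J) := by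
  refine le_antisymm (fun g hg => ?_) (sup_le ?_ ?_)
  · obtain ⟨⟨s, hs⟩, ⟨t, ht⟩⟩ :=
      (mem_center_iff.mp hg).imp (red_eq_zero_iff _).mp (red_eq_zero_iff _).mp
    have hg : g = (A ^ s) ^ J * (B ^ t) ^ J * C ^ g.z.val := by
      rw [← pow_mul, ← pow_mul, A_pow_mul_B_pow_mul_C_pow, mul_comm s, mul_comm t, ← hs,
        ← ht, ZMod.natCast_zmod_val]
    rw [hg]
    refine mul_mem (mul_mem ?_ ?_) (mem_sup_right (pow_mem ?_ _))
    · exact mem_sup_left (subset_closure ⟨_, rfl⟩)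
    · exact mem_sup_left (subset_closure ⟨_, rfl⟩)
    · rw [← commutatorElement_B_A]
      exact commutator_mem_commutator (mem_top _) (mem_top _)
  · rw [powSubgroup, closure_le, ← ker_outerHom]
    rintro _ ⟨g, rfl⟩
    rw [SetLike.mem_coe, MonoidHom.mem_ker, map_pow]
    ext <;> simp
  · rw [← ker_outerHom]
    exact Abelianization.commutator_subset_ker _

lemma card_center_mul : Nat.card (center (HeisMod N J)) * (J * J) = N * N * J := by
  have hcard : Nat.card (HeisMod N J) = N * N * J := by
    rw [Nat.card_congr ⟨fun g => (g.x, g.y, g.z), fun t => ⟨t.1, t.2.1, t.2.2⟩, fun _ => rfl,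
      fun _ => rfl⟩]
    simp [mul_assoc]
  rw [← hcard, ← (center (HeisMod N J)).card_mul_index, ← ker_outerHom, Subgroup.index_ker,
    MonoidHom.range_eq_top.mpr outerHom_surjective, card_top]
  simp

variable {a b : G}

def lift (ha : a ^ N = 1) (hb : b ^ N = 1) (hc : ⁅b, a⁆ ^ J = 1) (hca : Commute ⁅b, a⁆ a)
    (hcb : Commute ⁅b, a⁆ b) : HeisMod N J →* G where
  toFun g := a ^ g.x.val * b ^ g.y.val * ⁅b, a⁆ ^ g.z.val
  map_one' := by simp
  map_mul' g h := by
    rw [pow_mul_pow_mul_pow_mul_eq_of_commute_commutatorElement hca hcb, mul_x, mul_y, mul_z,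
      pow_zmodVal_eq ha (m := g.x.val + h.x.val) (by simp),
      pow_zmodVal_eq hb (m := g.y.val + h.y.val) (by simp),
      pow_zmodVal_eq hc (m := h.x.val * g.y.val + g.z.val + h.z.val)
        (by simp [red_apply]; ring)]

variable {ha : a ^ N = 1} {hb : b ^ N = 1} {hc : ⁅b, a⁆ ^ J = 1} {hca : Commute ⁅b, a⁆ a}
  {hcb : Commute ⁅b, a⁆ b}

lemma lift_apply (g : HeisMod N J) :
    lift ha hb hc hca hcb g = a ^ g.x.val * b ^ g.y.val * ⁅b, a⁆ ^ g.z.val := rfl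

lemma lift_A : lift ha hb hc hca hcb A = a := by
  simp [lift_apply, A, pow_zmodVal_eq ha (m := 1) Nat.cast_one]

lemma lift_B : lift ha hb hc hca hcb B = b := by
  simp [lift_apply, B, pow_zmodVal_eq hb (m := 1) Nat.cast_one]

lemma comp_lift_eq_id (f : G →* HeisMod N J) (hfa : f a = A) (hfb : f b = B) :
    f.comp (lift ha hb hc hca hcb) = MonoidHom.id _ := by
  ext1 g
  rw [MonoidHom.comp_apply, lift_apply, map_mul, map_mul, map_pow, map_pow, map_pow,
    map_commutatorElement, hfa, hfb, commutatorElement_B_A, A_pow_mul_B_pow_mul_C_pow]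
  simp

end HeisMod

section KGroup

variable (p e j : ℕ)

lemma ka_pow : ka p e j ^ p ^ e = 1 := by
  have h := PresentedGroup.one_of_mem (show fA ^ p ^ e ∈ KRels p e j by simp [KRels])
  rwa [map_pow] at h

lemma kb_pow : kb p e j ^ p ^ e = 1 := by
  have h := PresentedGroup.one_of_mem (show fB ^ p ^ e ∈ KRels p e j by simp [KRels])
  rwa [map_pow] at h

lemma commutatorElement_kb_ka_pow : ⁅kb p e j, ka p e j⁆ ^ p ^ j = 1 := by
  have h := PresentedGroup.one_of_mem (show ⁅fB, fA⁆ ^ p ^ j ∈ KRels p e j by simp [KRels])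
  rwa [map_pow, map_commutatorElement] at h

lemma commute_commutatorElement_kb_ka_ka : Commute ⁅kb p e j, ka p e j⁆ (ka p e j) := by
  have h := PresentedGroup.one_of_mem (show ⁅⁅fB, fA⁆, fA⁆ ∈ KRels p e j by simp [KRels])
  rwa [map_commutatorElement, map_commutatorElement, commutatorElement_eq_one_iff_commute] at h

lemma commute_commutatorElement_kb_ka_kb : Commute ⁅kb p e j, ka p e j⁆ (kb p e j) := by
  have h := PresentedGroup.one_of_mem (show ⁅⁅fB, fA⁆, fB⁆ ∈ KRels p e j by simp [KRels])
  rwa [map_commutatorElement, map_commutatorElement, commutatorElement_eq_one_iff_commute] at h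

variable [Fact (p ^ j ∣ p ^ e)]

open HeisMod in
lemma heisMod_satisfies_KRels : ∀ r ∈ KRels p e j,
    FreeGroup.lift (fun t => bif t then (A : HeisMod (p ^ e) (p ^ j)) else B) r = 1 := by
  have hA : FreeGroup.lift (fun t => bif t then (A : HeisMod (p ^ e) (p ^ j)) else B) fA = A :=
    FreeGroup.lift_apply_of
  have hB : FreeGroup.lift (fun t => bif t then (A : HeisMod (p ^ e) (p ^ j)) else B) fB = B :=
    FreeGroup.lift_apply_of
  simp only [KRels, Set.mem_insert_iff, Set.mem_singleton_iff]
  rintro r (rfl | rfl | rfl | rfl | rfl)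
  · rw [map_pow, hA, A_pow, ZMod.natCast_self]; rfl
  · rw [map_pow, hB, B_pow, ZMod.natCast_self]; rfl
  · rw [map_pow, map_commutatorElement, hA, hB, commutatorElement_B_A, C_pow, ZMod.natCast_self]
    rfl
  · rw [map_commutatorElement, map_commutatorElement, hA, hB, commutatorElement_B_A,
      commutatorElement_eq_one_iff_commute]
    exact C_commute B
  · rw [map_commutatorElement, map_commutatorElement, hA, hB, commutatorElement_B_A,
      commutatorElement_eq_one_iff_commute]
    exact C_commute A

variable [NeZero (p ^ e)] [NeZero (p ^ j)]

open HeisMod in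
def kGroupMulEquivHeisMod : KGroup p e j ≃* HeisMod (p ^ e) (p ^ j) :=
  MonoidHom.toMulEquiv (PresentedGroup.toGroup (heisMod_satisfies_KRels p e j))
    (lift (ka_pow p e j) (kb_pow p e j) (commutatorElement_kb_ka_pow p e j)
      (commute_commutatorElement_kb_ka_ka p e j) (commute_commutatorElement_kb_ka_kb p e j))
    (PresentedGroup.ext fun t => by cases t <;> simp [lift_A, lift_B, ka, kb])
    (comp_lift_eq_id _ (PresentedGroup.toGroup.of _) (PresentedGroup.toGroup.of _))

end KGroup

theorem statement10_general (p e j : ℕ) (hp : p.Prime) (hje : j ≤ e) :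
    Subgroup.center (KGroup p e j) =
      powSubgroup (KGroup p e j) (p ^ j) ⊔ commutator (KGroup p e j) ∧
    Nat.card (Subgroup.center (KGroup p e j)) = p ^ (2 * e - j) := by
  have : Fact (p ^ j ∣ p ^ e) := ⟨pow_dvd_pow p hje⟩
  have : NeZero p := ⟨hp.ne_zero⟩
  let f := kGroupMulEquivHeisMod p e j
  refine ⟨center_eq_powSubgroup_sup_commutator_of_mulEquiv f _
    HeisMod.center_eq_powSubgroup_sup_commutator, ?_⟩
  rw [Nat.card_congr (centerCongr f).toEquiv]
  apply Nat.eq_of_mul_eq_mul_right (by have := hp.pos; positivity : 0 < p ^ j * p ^ j)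
  rw [HeisMod.card_center_mul, ← pow_add, ← pow_add, ← pow_add, ← pow_add]
  congr 1
  omega

theorem statement10 (p e j : ℕ) (hp : p.Prime) (hodd : Odd p) (hj : 0 < j) (hje : j ≤ e) :
    Subgroup.center (KGroup p e j) =
      powSubgroup (KGroup p e j) (p ^ j) ⊔ commutator (KGroup p e j) ∧
    Nat.card (Subgroup.center (KGroup p e j)) = p ^ (2 * e - j) :=
  statement10_general p e j hp hje

end Statements

end Beauville
end
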